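/- (Appendix, Case 1.) For the shared pure state ρ_{β,γ} (β, γ : ℝ with β² + γ² ≠ 0), Bob's normalized reduced state after the PT evolution with Alice applying A₊ = 1, namely ρ_B' = (Tr_A ρ₊)/Re(trace ρ₊), equals Bob's initial reduced state Tr_A ρ_{β,γ} if and only if β·γ·sin α = 0 (i.e., the state is a product state or sin α = 0). -/

import Mathlib

open Matrix Kronecker Complex
open scoped ComplexOrder

noncomputable section

/-- Pauli matrix `σx`. -/
def σx : Matrix (Fin 2) (Fin 2) ℂ := !![0, 1; 1, 0]

/-- Pauli matrix `σy`. -/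
def σy : Matrix (Fin 2) (Fin 2) ℂ := !![0, -Complex.I; Complex.I, 0]

/-- Pauli matrix `σz`. -/
def σz : Matrix (Fin 2) (Fin 2) ℂ := !![1, 0; 0, -1]

/-- The simulated PT-symmetric evolution operator at the chosen time. -/
def Upt (α : ℝ) : Matrix (Fin 2) (Fin 2) ℂ :=
  !![(Real.sin α : ℂ), -Complex.I; -Complex.I, -(Real.sin α : ℂ)]

/-- Alice's operation `A₊` (do nothing). -/
def Apos : Matrix (Fin 2) (Fin 2) ℂ := 1

/-- Alice's operation `A₋` (bit flip `σx`). -/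
def Aneg : Matrix (Fin 2) (Fin 2) ℂ := σx

/-- Unnormalized post-selected state after Alice applies `A₊` followed by the
simulated PT evolution. -/
def postPlus (α : ℝ) (ρ : Matrix (Fin 2 × Fin 2) (Fin 2 × Fin 2) ℂ) :
    Matrix (Fin 2 × Fin 2) (Fin 2 × Fin 2) ℂ :=
  ((Upt α * Apos) ⊗ₖ (1 : Matrix (Fin 2) (Fin 2) ℂ)) * ρ *
    ((Upt α * Apos) ⊗ₖ (1 : Matrix (Fin 2) (Fin 2) ℂ))ᴴ

/-- Unnormalized post-selected state after Alice applies `A₋` followed by the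
simulated PT evolution. -/
def postMinus (α : ℝ) (ρ : Matrix (Fin 2 × Fin 2) (Fin 2 × Fin 2) ℂ) :
    Matrix (Fin 2 × Fin 2) (Fin 2 × Fin 2) ℂ :=
  ((Upt α * Aneg) ⊗ₖ (1 : Matrix (Fin 2) (Fin 2) ℂ)) * ρ *
    ((Upt α * Aneg) ⊗ₖ (1 : Matrix (Fin 2) (Fin 2) ℂ))ᴴ

/-- Probability that Bob obtains outcome `Π` given Alice applied `A₊`. -/
def Pplus (α : ℝ) (ρ : Matrix (Fin 2 × Fin 2) (Fin 2 × Fin 2) ℂ)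
    (Pi : Matrix (Fin 2) (Fin 2) ℂ) : ℝ :=
  ((((1 : Matrix (Fin 2) (Fin 2) ℂ) ⊗ₖ Pi) * postPlus α ρ).trace).re /
    ((postPlus α ρ).trace).re

/-- Probability that Bob obtains outcome `Π` given Alice applied `A₋`. -/
def Pminus (α : ℝ) (ρ : Matrix (Fin 2 × Fin 2) (Fin 2 × Fin 2) ℂ)
    (Pi : Matrix (Fin 2) (Fin 2) ℂ) : ℝ :=
  ((((1 : Matrix (Fin 2) (Fin 2) ℂ) ⊗ₖ Pi) * postMinus α ρ).trace).re /
    ((postMinus α ρ).trace).re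

/-- Bob's `σy`-measurement projector onto `|+_y⟩ = (|0⟩ + i|1⟩)/√2`. -/
def Piy : Matrix (Fin 2) (Fin 2) ℂ :=
  (1/2 : ℂ) • !![1, -Complex.I; Complex.I, 1]

/-- Bob's rank-one projector `Π(z,u)` for an arbitrary projective measurement. -/
def Pizu (z u : ℝ) : Matrix (Fin 2) (Fin 2) ℂ :=
  !![((Real.cos (z/2))^2 : ℂ),
     (Real.cos (z/2) : ℂ) * (Real.sin (z/2) : ℂ) * Complex.exp (-(Complex.I * u));
     (Real.cos (z/2) : ℂ) * (Real.sin (z/2) : ℂ) * Complex.exp (Complex.I * u),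
     ((Real.sin (z/2))^2 : ℂ)]

/-- The single-qubit state `|+⟩ = (|0⟩ + |1⟩)/√2`. -/
def ketPlus : Fin 2 → ℂ := ![((1 / Real.sqrt 2 : ℝ) : ℂ), ((1 / Real.sqrt 2 : ℝ) : ℂ)]

/-- The single-qubit state `|−⟩ = (|0⟩ − |1⟩)/√2`. -/
def ketMinus : Fin 2 → ℂ := ![((1 / Real.sqrt 2 : ℝ) : ℂ), ((-(1 / Real.sqrt 2) : ℝ) : ℂ)]

/-- The (normalized) pure state `|ψ_{β,γ}⟩ = (β|++⟩ + γ|−−⟩)/√(β²+γ²)`. -/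
def ψpure (β γ : ℝ) : Fin 2 × Fin 2 → ℂ := fun q =>
  ((β : ℂ) * (ketPlus q.1 * ketPlus q.2) + (γ : ℂ) * (ketMinus q.1 * ketMinus q.2)) /
    ((Real.sqrt (β^2 + γ^2) : ℝ) : ℂ)

/-- The pure two-qubit density matrix `ρ_{β,γ} = |ψ_{β,γ}⟩⟨ψ_{β,γ}|`. -/
def ρpure (β γ : ℝ) : Matrix (Fin 2 × Fin 2) (Fin 2 × Fin 2) ℂ :=
  Matrix.vecMulVec (ψpure β γ) (fun q => starRingEnd ℂ (ψpure β γ q))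

/-- The maximally entangled state `|ψ⁺⟩ = (|00⟩ + |11⟩)/√2`. -/
def ψmax : Fin 2 × Fin 2 → ℂ := fun q =>
  if q.1 = q.2 then ((1 / Real.sqrt 2 : ℝ) : ℂ) else 0

/-- The two-qubit Werner state `ρ_W(p) = p |ψ⁺⟩⟨ψ⁺| + ((1-p)/4) 1`. -/
def ρWerner (p : ℝ) : Matrix (Fin 2 × Fin 2) (Fin 2 × Fin 2) ℂ :=
  (p : ℂ) • Matrix.vecMulVec ψmax (fun q => starRingEnd ℂ (ψmax q)) +
    (((1 - p) / 4 : ℝ) : ℂ) • 1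

/-- The canonical two-qubit state with magnetizations `mx my mz` (Alice),
`nx ny nz` (Bob) and diagonal correlators `Cxx Cyy Czz`. -/
def ρcan (mx my mz nx ny nz Cxx Cyy Czz : ℝ) :
    Matrix (Fin 2 × Fin 2) (Fin 2 × Fin 2) ℂ :=
  (1/4 : ℂ) • ((1 : Matrix (Fin 2 × Fin 2) (Fin 2 × Fin 2) ℂ)
    + (mx : ℂ) • (σx ⊗ₖ (1 : Matrix (Fin 2) (Fin 2) ℂ))
    + (my : ℂ) • (σy ⊗ₖ (1 : Matrix (Fin 2) (Fin 2) ℂ))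
    + (mz : ℂ) • (σz ⊗ₖ (1 : Matrix (Fin 2) (Fin 2) ℂ))
    + (nx : ℂ) • ((1 : Matrix (Fin 2) (Fin 2) ℂ) ⊗ₖ σx)
    + (ny : ℂ) • ((1 : Matrix (Fin 2) (Fin 2) ℂ) ⊗ₖ σy)
    + (nz : ℂ) • ((1 : Matrix (Fin 2) (Fin 2) ℂ) ⊗ₖ σz)
    + (Cxx : ℂ) • (σx ⊗ₖ σx)
    + (Cyy : ℂ) • (σy ⊗ₖ σy)
    + (Czz : ℂ) • (σz ⊗ₖ σz))

/-- Bob's reduced matrix: the partial trace over Alice's subsystem. -/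
def ptraceA (X : Matrix (Fin 2 × Fin 2) (Fin 2 × Fin 2) ℂ) :
    Matrix (Fin 2) (Fin 2) ℂ :=
  Matrix.of fun i j => ∑ k : Fin 2, X (k, i) (k, j)

/-- The trace distance `T(A,B) = (1/2) tr √((A-B)ᴴ (A-B))`, where the square
root is the positive semidefinite square root. -/
def traceDist (A B : Matrix (Fin 2) (Fin 2) ℂ) : ℝ :=
  (1/2) * ((((Matrix.posSemidef_conjTranspose_mul_self (A - B)).1.eigenvectorUnitary : Matrix (Fin 2) (Fin 2) ℂ) *
    Matrix.diagonal (((↑) : ℝ → ℂ) ∘ (Real.sqrt ·) ∘ (Matrix.posSemidef_conjTranspose_mul_self (A - B)).1.eigenvalues) *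
    (star (Matrix.posSemidef_conjTranspose_mul_self (A - B)).1.eigenvectorUnitary : Matrix (Fin 2) (Fin 2) ℂ)).trace).re

/-! Write a two-qubit pure state as its amplitude matrix `Ψ`, `ψ = ∑ Ψ a b |a⟩|b⟩`. Bob's reduced
state is then `Ψᵀ Ψ̄`, and Alice's local operation `M ⊗ 1` acts as `Ψ ↦ M Ψ`. For `ψ_{β,γ}` the
matrix `Ψ` is real and symmetric, so `Tr_A ρ₊ = Ψ (Uᵀ Ū) Ψ`, where
`Uᵀ Ū = (1 + sin² α) 1 - 2 sin α σy`. Since `Ψ σy Ψ = det Ψ • σy` and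
`det Ψ = βγ / (β² + γ²)`, we get `Tr_A ρ₊ = (1 + sin² α) Tr_A ρ - 2 sin α βγ / (β² + γ²) σy`.
This has trace `1 + sin² α`, so after normalization the `σy` term vanishes iff `βγ sin α = 0`. -/

def amplitudeMatrix {m n : Type*} (ψ : m × n → ℂ) : Matrix m n ℂ :=
  Matrix.of fun a b => ψ (a, b)

lemma mul_vecMulVec_star_mul_conjTranspose {m n : Type*} [Fintype m] [Fintype n]
    (A : Matrix m n ℂ) (ψ : n → ℂ) :
    A * vecMulVec ψ (star ψ) * Aᴴ = vecMulVec (A *ᵥ ψ) (star (A *ᵥ ψ)) := by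
  rw [mul_vecMulVec, vecMulVec_mul, star_mulVec]

lemma amplitudeMatrix_kronecker_one_mulVec {m n : Type*} [Fintype m] [Fintype n] [DecidableEq n]
    (M : Matrix m m ℂ) (ψ : m × n → ℂ) :
    amplitudeMatrix ((M ⊗ₖ (1 : Matrix n n ℂ)) *ᵥ ψ) = M * amplitudeMatrix ψ := by
  ext a b
  simp [amplitudeMatrix, mulVec, dotProduct, Fintype.sum_prod_type, one_apply, mul_apply]

lemma ptraceA_vecMulVec_star (ψ : Fin 2 × Fin 2 → ℂ) :
    ptraceA (vecMulVec ψ (star ψ)) =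
      (amplitudeMatrix ψ)ᵀ * (amplitudeMatrix ψ).map (starRingEnd ℂ) := by
  ext i j
  simp [ptraceA, amplitudeMatrix, vecMulVec_apply, mul_apply]

lemma trace_ptraceA (X : Matrix (Fin 2 × Fin 2) (Fin 2 × Fin 2) ℂ) :
    (ptraceA X).trace = X.trace := by
  simp only [trace, diag, ptraceA, of_apply, Fintype.sum_prod_type]
  exact Finset.sum_comm.symm

lemma transpose_mul_σy_mul (A : Matrix (Fin 2) (Fin 2) ℂ) : Aᵀ * σy * A = A.det • σy := by
  ext i j
  fin_cases i <;> fin_cases j <;> simp [σy, det_fin_two, mul_apply, Fin.sum_univ_two] <;> ring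

lemma Upt_transpose_mul_map_conj (α : ℝ) :
    (Upt α)ᵀ * (Upt α).map (starRingEnd ℂ) =
      ((1 + Real.sin α ^ 2 : ℝ) : ℂ) • 1 - ((2 * Real.sin α : ℝ) : ℂ) • σy := by
  ext i j
  fin_cases i <;> fin_cases j <;>
    simp [Upt, σy, mul_apply, Fin.sum_univ_two, ← Complex.sin_conj] <;> ring

lemma transpose_mul_map_conj_of_symm_of_real {n : Type*} [Fintype n] (M Ψ : Matrix n n ℂ)
    (hsymm : Ψᵀ = Ψ) (hreal : Ψ.map (starRingEnd ℂ) = Ψ) :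
    (M * Ψ)ᵀ * (M * Ψ).map (starRingEnd ℂ) = Ψ * (Mᵀ * M.map (starRingEnd ℂ)) * Ψ := by
  rw [transpose_mul, Matrix.map_mul, hsymm, hreal, Matrix.mul_assoc, Matrix.mul_assoc,
    Matrix.mul_assoc]

lemma amplitudeMatrix_ψpure (β γ : ℝ) :
    amplitudeMatrix (ψpure β γ) =
      ((2 * √(β ^ 2 + γ ^ 2) : ℝ) : ℂ)⁻¹ • !![(β + γ : ℂ), β - γ; β - γ, β + γ] := by
  have h2 : ((√2 : ℝ) : ℂ)⁻¹ * ((√2 : ℝ) : ℂ)⁻¹ = 2⁻¹ := by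
    rw [← mul_inv, ← ofReal_mul, Real.mul_self_sqrt zero_le_two, ofReal_ofNat]
  ext i j
  fin_cases i <;> fin_cases j <;>
    simp [amplitudeMatrix, ψpure, ketPlus, ketMinus, h2] <;> ring

lemma amplitudeMatrix_ψpure_transpose (β γ : ℝ) :
    (amplitudeMatrix (ψpure β γ))ᵀ = amplitudeMatrix (ψpure β γ) := by
  rw [amplitudeMatrix_ψpure]
  ext i j
  fin_cases i <;> fin_cases j <;> rfl

lemma amplitudeMatrix_ψpure_map_conj (β γ : ℝ) :
    (amplitudeMatrix (ψpure β γ)).map (starRingEnd ℂ) = amplitudeMatrix (ψpure β γ) := by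
  rw [amplitudeMatrix_ψpure]
  ext i j
  fin_cases i <;> fin_cases j <;> simp [map_ofNat]

lemma det_amplitudeMatrix_ψpure (β γ : ℝ) :
    (amplitudeMatrix (ψpure β γ)).det = ((β * γ / (β ^ 2 + γ ^ 2) : ℝ) : ℂ) := by
  rw [amplitudeMatrix_ψpure, det_smul, det_fin_two_of, Fintype.card_fin, ← ofReal_inv,
    ← ofReal_pow, inv_pow, mul_pow, Real.sq_sqrt (by positivity), mul_inv]
  push_cast
  ring

lemma trace_amplitudeMatrix_ψpure_mul_self (β γ : ℝ) (hβγ : β ^ 2 + γ ^ 2 ≠ 0) :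
    (amplitudeMatrix (ψpure β γ) * amplitudeMatrix (ψpure β γ)).trace = 1 := by
  have hN : ((√(β ^ 2 + γ ^ 2) : ℝ) : ℂ) ^ 2 = β ^ 2 + γ ^ 2 := by
    rw [← ofReal_pow, Real.sq_sqrt (by positivity)]; push_cast; ring
  have hβγ' : (β : ℂ) ^ 2 + γ ^ 2 ≠ 0 := by exact_mod_cast hβγ
  rw [amplitudeMatrix_ψpure, smul_mul_smul_comm, trace_smul, trace_fin_two]
  simp [mul_apply, Fin.sum_univ_two]
  field_simp
  rw [hN]
  ring

lemma ρpure_eq_vecMulVec (β γ : ℝ) :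
    ρpure β γ = vecMulVec (ψpure β γ) (star (ψpure β γ)) := rfl

lemma ptraceA_ρpure (β γ : ℝ) :
    ptraceA (ρpure β γ) = amplitudeMatrix (ψpure β γ) * amplitudeMatrix (ψpure β γ) := by
  rw [ρpure_eq_vecMulVec, ptraceA_vecMulVec_star, amplitudeMatrix_ψpure_transpose,
    amplitudeMatrix_ψpure_map_conj]

lemma ptraceA_postPlus_ρpure (α β γ : ℝ) :
    ptraceA (postPlus α (ρpure β γ)) =
      (1 + Real.sin α ^ 2) • ptraceA (ρpure β γ) -
        (2 * Real.sin α * (β * γ / (β ^ 2 + γ ^ 2))) • σy := by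
  have hΨ : amplitudeMatrix (ψpure β γ) * σy * amplitudeMatrix (ψpure β γ) =
      (amplitudeMatrix (ψpure β γ)).det • σy := by
    rw [← transpose_mul_σy_mul, amplitudeMatrix_ψpure_transpose]
  rw [ptraceA_ρpure, postPlus, Apos, Matrix.mul_one, ρpure_eq_vecMulVec,
    mul_vecMulVec_star_mul_conjTranspose, ptraceA_vecMulVec_star,
    amplitudeMatrix_kronecker_one_mulVec,
    transpose_mul_map_conj_of_symm_of_real _ _ (amplitudeMatrix_ψpure_transpose β γ)
      (amplitudeMatrix_ψpure_map_conj β γ),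
    Upt_transpose_mul_map_conj, Matrix.mul_sub, Matrix.sub_mul, Matrix.mul_smul,
    Matrix.smul_mul, Matrix.mul_one, Matrix.mul_smul, Matrix.smul_mul, hΨ, smul_smul,
    det_amplitudeMatrix_ψpure, ← ofReal_mul]
  simp only [← Complex.coe_algebraMap, algebraMap_smul]

lemma trace_postPlus_ρpure (α β γ : ℝ) (hβγ : β ^ 2 + γ ^ 2 ≠ 0) :
    (postPlus α (ρpure β γ)).trace = ((1 + Real.sin α ^ 2 : ℝ) : ℂ) := by
  rw [← trace_ptraceA, ptraceA_postPlus_ρpure, trace_sub, trace_smul, trace_smul,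
    ptraceA_ρpure, trace_amplitudeMatrix_ψpure_mul_self β γ hβγ]
  simp [σy, trace_fin_two]

lemma σy_ne_zero : σy ≠ 0 := fun h => by
  simpa [σy] using congr_fun₂ h 0 1

/-- Appendix, Case 1: for the shared pure state `ρ_{β,γ}`, Bob's normalized
reduced state after the PT evolution (Alice applying `A₊ = 1`) equals Bob's
initial reduced state iff `βγ sin α = 0`. -/
theorem stmt15 (α β γ : ℝ) (hβγ : β^2 + γ^2 ≠ 0) :
    (((postPlus α (ρpure β γ)).trace).re)⁻¹ • ptraceA (postPlus α (ρpure β γ)) =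
      ptraceA (ρpure β γ) ↔ β * γ * Real.sin α = 0 := by
  have hnorm : 1 + Real.sin α ^ 2 ≠ 0 := by positivity
  rw [trace_postPlus_ρpure α β γ hβγ, ofReal_re, ptraceA_postPlus_ρpure, smul_sub, smul_smul,
    inv_mul_cancel₀ hnorm, one_smul, sub_eq_self, smul_smul, smul_eq_zero,
    or_iff_left σy_ne_zero, mul_eq_zero, inv_eq_zero, or_iff_right hnorm]
  rw [show 2 * Real.sin α * (β * γ / (β ^ 2 + γ ^ 2)) =
      2 / (β ^ 2 + γ ^ 2) * (β * γ * Real.sin α) by ring]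
  simp [hβγ]
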